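/- arXiv:1406.5274 — 3 statements merged into one kernel-verified Lean document; each statement's English description precedes it below -/
import Mathlib

section
/- Let n ≥ 2 and let Φ : ℝⁿ → ℝ be locally integrable on the closed half space {xₙ ≥ 0} and satisfy ∫_{ℝⁿ₊} Φ(x) Δφ(x) dx = 0 for every twice continuously differentiable, compactly supported φ : ℝⁿ → ℝ such that ∂φ/∂xₙ(x', 0) = 0 for all x' ∈ ℝⁿ⁻¹. Define the even extension Φ̃ : ℝⁿ → ℝ by Φ̃(x', xₙ) = Φ(x', xₙ) for xₙ ≥ 0 and Φ̃(x', xₙ) = Φ(x', −xₙ) for xₙ < 0. Then Φ̃ is weakly harmonic on ℝⁿ: ∫_{ℝⁿ} Φ̃(x) Δψ(x) dx = 0 for every twice continuously differentiable ψ : ℝⁿ → ℝ with compact support. -/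
/-!
Put `φ := ψ + ψ ∘ R`, where `R` is the reflection in `{xₙ = 0}`. Since `R` is a linear isometry
fixing the hyperplane and commuting with `Δ`, the function `φ` satisfies `∂φ/∂xₙ = 0` on
`{xₙ = 0}`, and the change of variables `x ↦ R x` on the lower half space turns
`∫ Φ̃ Δψ` into `∫_{ℝⁿ₊} Φ (Δψ + Δψ ∘ R) = ∫_{ℝⁿ₊} Φ Δφ`, which vanishes by hypothesis.
-/

open MeasureTheory Set Metric Filter

noncomputable section

abbrev En (n : ℕ) := EuclideanSpace ℝ (Fin n)

/-- the `i`-th standard basis vector of `ℝⁿ`. -/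
def eb (n : ℕ) (i : Fin n) : En n := EuclideanSpace.single i 1

/-- the Laplacian `Δf`, computed as the sum of the second derivatives in the
coordinate directions. -/
def vlap {n : ℕ} {F : Type*} [NormedAddCommGroup F] [NormedSpace ℝ F]
    (f : En n → F) (x : En n) : F :=
  ∑ i, fderiv ℝ (fun y => fderiv ℝ f y (eb n i)) x (eb n i)

/-- the divergence `div v = Σⱼ ∂vʲ/∂xⱼ` of a vector field. -/
def vdiv {n : ℕ} (v : En n → En n) (x : En n) : ℝ :=
  ∑ i, fderiv ℝ v x (eb n i) i

/-- the index of the last coordinate of `ℝⁿ`. -/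
def lastIdx (n : ℕ) (hn : 2 ≤ n) : Fin n := ⟨n - 1, by omega⟩

/-- the last coordinate `xₙ` of a point of `ℝⁿ`. -/
def xlast (n : ℕ) (hn : 2 ≤ n) (x : En n) : ℝ := x (lastIdx n hn)

/-- the open upper half space `ℝⁿ₊ = {x : xₙ > 0}`. -/
def openHalf (n : ℕ) (hn : 2 ≤ n) : Set (En n) := {x : En n | 0 < xlast n hn x}

/-- the closed upper half space `{x : xₙ ≥ 0}`. -/
def closedHalf (n : ℕ) (hn : 2 ≤ n) : Set (En n) := {x : En n | 0 ≤ xlast n hn x}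

/-- the reflection of a point of `ℝⁿ` in the hyperplane `{xₙ = 0}`. -/
def reflectLast (n : ℕ) (hn : 2 ≤ n) (x : En n) : En n :=
  WithLp.toLp 2 (fun i => if i = lastIdx n hn then -(x i) else x i)

lemma MeasureTheory.LocallyIntegrableOn.integrableOn_mul_of_hasCompactSupport {X : Type*}
    [TopologicalSpace X] [T2Space X] [MeasurableSpace X] [OpensMeasurableSpace X]
    {μ : Measure X} {Φ g : X → ℝ} {s : Set X} (hΦ : LocallyIntegrableOn Φ s μ)
    (hs : IsClosed s) (hg : Continuous g) (hgc : HasCompactSupport g) :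
    IntegrableOn (fun x => Φ x * g x) s μ :=
  ((locallyIntegrableOn_iff_locallyIntegrable_restrict hs).mp hΦ
    ).integrable_smul_right_of_hasCompactSupport hg hgc

variable {n : ℕ} (hn : 2 ≤ n)

section Reflection

def reflectLastEquiv (n : ℕ) (hn : 2 ≤ n) : En n ≃ₗᵢ[ℝ] En n :=
  .piLpCongrRight 2 fun i => if i = lastIdx n hn then .neg ℝ else .refl ℝ ℝ

lemma coe_reflectLastEquiv : ⇑(reflectLastEquiv n hn) = reflectLast n hn := by
  ext x i
  by_cases h : i = lastIdx n hn <;> simp [reflectLastEquiv, reflectLast, h]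

lemma reflectLast_reflectLast (x : En n) : reflectLast n hn (reflectLast n hn x) = x := by
  ext i
  by_cases h : i = lastIdx n hn <;> simp [reflectLast, h]

lemma xlast_reflectLast (x : En n) : xlast n hn (reflectLast n hn x) = -xlast n hn x := by
  simp [xlast, reflectLast]

lemma reflectLast_eq_self {x : En n} (hx : xlast n hn x = 0) : reflectLast n hn x = x := by
  ext i
  by_cases h : i = lastIdx n hn
  · simp_all [reflectLast, xlast]
  · simp [reflectLast, h]

lemma reflectLast_eb_last : reflectLast n hn (eb n (lastIdx n hn)) = -eb n (lastIdx n hn) := by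
  ext i
  by_cases h : i = lastIdx n hn <;> simp [reflectLast, eb, h]

lemma reflectLast_eb_of_ne {i : Fin n} (hi : i ≠ lastIdx n hn) :
    reflectLast n hn (eb n i) = eb n i := by
  ext j
  by_cases h : j = lastIdx n hn
  · simp [reflectLast, eb, h, Ne.symm hi]
  · simp [reflectLast, h]

lemma contDiff_reflectLast {k : WithTop ℕ∞} : ContDiff ℝ k (reflectLast n hn) :=
  coe_reflectLastEquiv hn ▸ (reflectLastEquiv n hn).contDiff

lemma continuous_reflectLast : Continuous (reflectLast n hn) :=
  (contDiff_reflectLast hn (k := 0)).continuous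

lemma HasCompactSupport.comp_reflectLast {F : Type*} [Zero F] {f : En n → F}
    (hf : HasCompactSupport f) : HasCompactSupport (f ∘ reflectLast n hn) :=
  coe_reflectLastEquiv hn ▸ hf.comp_homeomorph (reflectLastEquiv n hn).toHomeomorph

end Reflection

section Laplacian

lemma fderiv_fderiv_comp_continuousLinearEquiv {E F G : Type*} [NormedAddCommGroup E]
    [NormedSpace ℝ E] [NormedAddCommGroup F] [NormedSpace ℝ F] [NormedAddCommGroup G]
    [NormedSpace ℝ G] (A : E ≃L[ℝ] F) (ψ : F → G) (v w x : E) :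
    fderiv ℝ (fun y => fderiv ℝ (ψ ∘ A) y v) x w =
      fderiv ℝ (fun z => fderiv ℝ ψ z (A v)) (A x) (A w) := by
  have h : (fun y => fderiv ℝ (ψ ∘ A) y v) = (fun z => fderiv ℝ ψ z (A v)) ∘ A := by
    ext y
    simp [A.comp_right_fderiv]
  rw [h, A.comp_right_fderiv]
  rfl

variable {F : Type*} [NormedAddCommGroup F] [NormedSpace ℝ F]

lemma vlap_comp_reflectLast (ψ : En n → F) (x : En n) :
    vlap (ψ ∘ reflectLast n hn) x = vlap ψ (reflectLast n hn x) := by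
  unfold vlap
  refine Finset.sum_congr rfl fun i _ => ?_
  have h := fderiv_fderiv_comp_continuousLinearEquiv
    (reflectLastEquiv n hn).toContinuousLinearEquiv ψ (eb n i) (eb n i) x
  simp only [LinearIsometryEquiv.coe_toContinuousLinearEquiv, coe_reflectLastEquiv] at h
  rw [h]
  by_cases hi : i = lastIdx n hn
  · subst hi
    simp [reflectLast_eb_last, fderiv_fun_neg]
  · rw [reflectLast_eb_of_ne hn hi]

lemma vlap_add {f g : En n → F} (hf : ContDiff ℝ 2 f) (hg : ContDiff ℝ 2 g) :
    vlap (f + g) = vlap f + vlap g := by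
  ext x
  simp only [vlap, Pi.add_apply, ← Finset.sum_add_distrib]
  refine Finset.sum_congr rfl fun i _ => ?_
  have hdiff : ∀ {h : En n → F}, ContDiff ℝ 2 h →
      Differentiable ℝ (fun y => fderiv ℝ h y (eb n i)) := fun hh =>
    ((hh.fderiv_right (by norm_num)).clm_apply contDiff_const).differentiable one_ne_zero
  have hsum : (fun y => fderiv ℝ (f + g) y (eb n i)) =
      (fun y => fderiv ℝ f y (eb n i)) + fun y => fderiv ℝ g y (eb n i) := by
    ext y
    simp [fderiv_add (hf.differentiable two_ne_zero y) (hg.differentiable two_ne_zero y)]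
  rw [hsum, fderiv_add (hdiff hf x) (hdiff hg x)]
  rfl

lemma continuous_vlap {f : En n → F} (hf : ContDiff ℝ 2 f) : Continuous (vlap f) :=
  continuous_finsetSum _ fun i _ =>
    (((hf.fderiv_right (by norm_num)).clm_apply contDiff_const).continuous_fderiv
      one_ne_zero).clm_apply continuous_const

lemma HasCompactSupport.vlap {f : En n → F} (hf : HasCompactSupport f) :
    HasCompactSupport (vlap f) :=
  hf.mono' fun x hx => by
    obtain ⟨i, -, hi⟩ := Finset.exists_ne_zero_of_sum_ne_zero hx
    exact tsupport_fderiv_apply_subset ℝ _ (tsupport_fderiv_apply_subset ℝ _ (subset_tsupport _ hi))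

lemma fderiv_add_comp_reflectLast_eb_last {ψ : En n → F} {x : En n}
    (hψ : DifferentiableAt ℝ ψ x) (hx : xlast n hn x = 0) :
    fderiv ℝ (ψ + ψ ∘ reflectLast n hn) x (eb n (lastIdx n hn)) = 0 := by
  set A := (reflectLastEquiv n hn).toContinuousLinearEquiv
  have hA : ⇑A = reflectLast n hn := coe_reflectLastEquiv hn
  have hψA : DifferentiableAt ℝ (ψ ∘ A) x := by
    rw [A.comp_right_differentiableAt_iff, hA, reflectLast_eq_self hn hx]
    exact hψ
  rw [← hA, fderiv_add hψ hψA, A.comp_right_fderiv]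
  simp [hA, reflectLast_eq_self hn hx, reflectLast_eb_last]

end Laplacian

section HalfSpace

lemma isClosed_closedHalf : IsClosed (closedHalf n hn) :=
  isClosed_le continuous_const (by unfold xlast; fun_prop)

lemma preimage_reflectLast_openHalf : reflectLast n hn ⁻¹' openHalf n hn = (closedHalf n hn)ᶜ := by
  ext x
  simp [openHalf, closedHalf, xlast_reflectLast]

lemma ae_xlast_ne_zero : ∀ᵐ x : En n, xlast n hn x ≠ 0 := by
  refine measure_eq_zero_iff_ae_notMem.mp (Measure.addHaar_submodule _
    (LinearMap.ker (EuclideanSpace.proj (lastIdx n hn) : En n →L[ℝ] ℝ).toLinearMap) ?_)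
  intro htop
  have h : EuclideanSpace.proj (lastIdx n hn) (eb n (lastIdx n hn)) = (0 : ℝ) :=
    LinearMap.mem_ker.mp (htop ▸ Submodule.mem_top)
  simp [eb] at h

lemma closedHalf_ae_eq_openHalf : closedHalf n hn =ᵐ[volume] openHalf n hn := by
  filter_upwards [ae_xlast_ne_zero hn] with x hx
  exact propext ⟨fun h => lt_of_le_of_ne h hx.symm, le_of_lt⟩

lemma integrableOn_compl_closedHalf_comp_reflectLast_iff {E : Type*} [NormedAddCommGroup E]
    {f : En n → E} :
    IntegrableOn (f ∘ reflectLast n hn) (closedHalf n hn)ᶜ ↔ IntegrableOn f (openHalf n hn) := by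
  rw [← preimage_reflectLast_openHalf, ← coe_reflectLastEquiv hn]
  exact (reflectLastEquiv n hn).measurePreserving.integrableOn_comp_preimage
    (reflectLastEquiv n hn).toHomeomorph.measurableEmbedding

lemma setIntegral_compl_closedHalf_comp_reflectLast {E : Type*} [NormedAddCommGroup E]
    [NormedSpace ℝ E] (f : En n → E) :
    ∫ x in (closedHalf n hn)ᶜ, f (reflectLast n hn x) = ∫ x in openHalf n hn, f x := by
  rw [← preimage_reflectLast_openHalf, ← coe_reflectLastEquiv hn]
  exact (reflectLastEquiv n hn).measurePreserving.setIntegral_preimage_emb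
    (reflectLastEquiv n hn).toHomeomorph.measurableEmbedding f _

def evenExt (Φ : En n → ℝ) (x : En n) : ℝ :=
  if 0 ≤ xlast n hn x then Φ x else Φ (reflectLast n hn x)

end HalfSpace

lemma integral_evenExt_mul {Φ g : En n → ℝ} (hΦ : LocallyIntegrableOn Φ (closedHalf n hn))
    (hg : Continuous g) (hgc : HasCompactSupport g) :
    ∫ x, evenExt hn Φ x * g x = ∫ x in openHalf n hn, Φ x * (g x + g (reflectLast n hn x)) := by
  set R := reflectLast n hn
  have hC : MeasurableSet (closedHalf n hn) := (isClosed_closedHalf hn).measurableSet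
  have hO : openHalf n hn ⊆ closedHalf n hn := fun _ hx => le_of_lt (α := ℝ) hx
  have hupper : IntegrableOn (fun x => Φ x * g x) (closedHalf n hn) :=
    hΦ.integrableOn_mul_of_hasCompactSupport (isClosed_closedHalf hn) hg hgc
  have hlower : IntegrableOn (fun x => Φ x * g (R x)) (closedHalf n hn) :=
    hΦ.integrableOn_mul_of_hasCompactSupport (isClosed_closedHalf hn)
      (hg.comp (continuous_reflectLast hn)) (hgc.comp_reflectLast hn)
  have heqU : EqOn (fun x => evenExt hn Φ x * g x) (fun x => Φ x * g x) (closedHalf n hn) :=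
    fun x hx => by simp only [evenExt, if_pos (show 0 ≤ xlast n hn x from hx)]
  have heqL : EqOn (fun x => evenExt hn Φ x * g x) ((fun x => Φ x * g (R x)) ∘ R)
      (closedHalf n hn)ᶜ := fun x hx => by
    simp only [evenExt, if_neg (show ¬ 0 ≤ xlast n hn x from hx), Function.comp_apply, R,
      reflectLast_reflectLast]
  have hint : Integrable (fun x => evenExt hn Φ x * g x) := by
    rw [← integrableOn_univ, ← union_compl_self (closedHalf n hn)]
    refine ((integrableOn_congr_fun heqU hC).mpr hupper).union
      ((integrableOn_congr_fun heqL hC.compl).mpr ?_)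
    exact (integrableOn_compl_closedHalf_comp_reflectLast_iff hn).mpr (hlower.mono_set hO)
  calc ∫ x, evenExt hn Φ x * g x
      = (∫ x in closedHalf n hn, Φ x * g x) + ∫ x in (closedHalf n hn)ᶜ, Φ (R x) * g (R (R x)) := by
        rw [← integral_add_compl hC hint, setIntegral_congr_fun hC heqU,
          setIntegral_congr_fun hC.compl heqL]
        rfl
    _ = (∫ x in openHalf n hn, Φ x * g x) + ∫ x in openHalf n hn, Φ x * g (R x) := by
        rw [setIntegral_congr_set (closedHalf_ae_eq_openHalf hn),
          setIntegral_compl_closedHalf_comp_reflectLast hn fun x => Φ x * g (R x)]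
    _ = ∫ x in openHalf n hn, Φ x * (g x + g (R x)) := by
        rw [← integral_add (hupper.mono_set hO) (hlower.mono_set hO)]
        simp only [mul_add]

/-- The reflection step in the proof of Lemma 2.5: a function satisfying the weak
homogeneous Neumann condition on the half space has weakly harmonic even extension. -/
theorem even_extension_weakly_harmonic
    (n : ℕ) (hn : 2 ≤ n) (Φ : En n → ℝ)
    (hloc : LocallyIntegrableOn Φ (closedHalf n hn))
    -- weak homogeneous Neumann condition: ∫ Φ Δφ = 0 for C² compactly supported φ
    -- with ∂φ/∂xₙ = 0 on {xₙ = 0}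
    (hweak : ∀ φ : En n → ℝ, ContDiff ℝ 2 φ → HasCompactSupport φ →
        (∀ x : En n, xlast n hn x = 0 → fderiv ℝ φ x (eb n (lastIdx n hn)) = 0) →
        ∫ x in openHalf n hn, Φ x * vlap φ x = 0)
    -- the even extension of Φ
    (Φt : En n → ℝ)
    (hΦt : ∀ x : En n, Φt x = if 0 ≤ xlast n hn x then Φ x else Φ (reflectLast n hn x)) :
    ∀ ψ : En n → ℝ, ContDiff ℝ 2 ψ → HasCompactSupport ψ →
      ∫ x : En n, Φt x * vlap ψ x = 0 := by
  intro ψ hψ hψc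
  obtain rfl : Φt = evenExt hn Φ := funext hΦt
  have hψR : ContDiff ℝ 2 (ψ ∘ reflectLast n hn) := hψ.comp (contDiff_reflectLast hn)
  calc ∫ x, evenExt hn Φ x * vlap ψ x
      = ∫ x in openHalf n hn, Φ x * (vlap ψ x + vlap ψ (reflectLast n hn x)) :=
        integral_evenExt_mul hn hloc (continuous_vlap hψ) hψc.vlap
    _ = ∫ x in openHalf n hn, Φ x * vlap (ψ + ψ ∘ reflectLast n hn) x := by
        simp only [vlap_add hψ hψR, Pi.add_apply, vlap_comp_reflectLast]
    _ = 0 := hweak _ (hψ.add hψR) (hψc.add (hψc.comp_reflectLast hn)) fun x hx =>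
        fderiv_add_comp_reflectLast_eb_last hn (hψ.differentiable two_ne_zero x) hx
end
end

section
/- Let n ≥ 2, T > 0 and γ ∈ [0, 1/2). Let v : {xₙ ≥ 0} × (0,T] → ℝⁿ be such that v, ∇v, ∇²v, ∂ₜv are continuous on {xₙ ≥ 0} × (0,T], and let ∇q be continuous on {xₙ ≥ 0} × (0,T]. Assume the hypotheses of Lemma 5.2: ∂ₜv − Δv + ∇q = 0 and div v = 0 on ℝⁿ₊ × (0,T]; v(x',0,t) = 0; sup_{0<t≤T} t^γ sup_{x} |v(x,t)| < ∞; sup{ t^{γ+1/2}(xₙ² + t)^{1/2}|∇q(x,t)| } < ∞; ∇v(·,t) is bounded for each t ∈ (0,T); and ∫₀^T ∫_{ℝⁿ₊} ( v·(∂ₜφ + Δφ) − ∇q·φ ) dx dt = 0 for every smooth φ : ℝⁿ × ℝ → ℝⁿ with compact support contained in ℝⁿ₊ × (−∞, T). Then the same identity ∫₀^T ∫_{ℝⁿ₊} ( v·(∂ₜφ + Δφ) − ∇q·φ ) dx dt = 0 holds for every smooth φ : ℝⁿ × ℝ → ℝⁿ whose support is a compact subset of {xₙ ≥ 0} × [0,T]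 and which vanishes on {xₙ = 0} ∪ {t = T}. -/
open MeasureTheory Set Metric Filter Topology intervalIntegral

noncomputable section

variable {n : ℕ}

/-- the embedding J : Eⁿ →L Eⁿ × ℝ, y ↦ (y,0) -/
def Jc (n : ℕ) : En n →L[ℝ] (En n × ℝ) := (ContinuousLinearMap.id ℝ (En n)).prod 0

lemma hasFDerivAt_fix_snd (t : ℝ) (x : En n) :
    HasFDerivAt (fun y : En n => (y, t)) (Jc n) x :=
  (hasFDerivAt_id x).prodMk (hasFDerivAt_const t x)

/-- time-derivative functional -/
def Dtf {F : Type*} [NormedAddCommGroup F] [NormedSpace ℝ F]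
    (φ : En n × ℝ → F) (p : En n × ℝ) : F :=
  fderiv ℝ φ p ((0 : En n), (1 : ℝ))

/-- spatial gradient operator -/
def Grf {F : Type*} [NormedAddCommGroup F] [NormedSpace ℝ F]
    (φ : En n × ℝ → F) (p : En n × ℝ) : En n →L[ℝ] F :=
  (fderiv ℝ φ p).comp (Jc n)

/-- spatial laplacian as a function on the product space -/
def Lapf {F : Type*} [NormedAddCommGroup F] [NormedSpace ℝ F]
    (φ : En n × ℝ → F) (p : En n × ℝ) : F :=
  ∑ i, ((fderiv ℝ (Grf φ) p).comp (Jc n) (eb n i)) (eb n i)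

section lems
variable {F : Type*} [NormedAddCommGroup F] [NormedSpace ℝ F] {φ : En n × ℝ → F}

lemma deriv_slice (hφ : ContDiff ℝ (⊤ : ℕ∞) φ) (x : En n) (t : ℝ) :
    deriv (fun s => φ (x, s)) t = Dtf φ (x, t) := by
  have h1 : HasDerivAt (fun s : ℝ => ((x, s) : En n × ℝ)) ((0 : En n), (1 : ℝ)) t :=
    (hasDerivAt_const t x).prodMk (hasDerivAt_id t)
  exact ((hφ.differentiable (by simp) (x, t)).hasFDerivAt.comp_hasDerivAt t h1).deriv

lemma fderiv_slice (hφ : Differentiable ℝ φ) (x : En n) (t : ℝ) :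
    fderiv ℝ (fun y => φ (y, t)) x = Grf φ (x, t) :=
  ((hφ (x, t)).hasFDerivAt.comp x (hasFDerivAt_fix_snd t x)).fderiv

lemma contDiff_Grf (hφ : ContDiff ℝ (⊤ : ℕ∞) φ) : ContDiff ℝ (⊤ : ℕ∞) (Grf φ) := by
  have h1 : ContDiff ℝ (⊤ : ℕ∞) (fderiv ℝ φ) := hφ.fderiv_right (by simp)
  exact (((ContinuousLinearMap.compL ℝ (En n) (En n × ℝ) F).flip (Jc n)).contDiff).comp h1

lemma vlap_slice (hφ : ContDiff ℝ (⊤ : ℕ∞) φ) (x : En n) (t : ℝ) :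
    vlap (fun y => φ (y, t)) x = Lapf φ (x, t) := by
  have hG : ContDiff ℝ (⊤ : ℕ∞) (Grf φ) := contDiff_Grf hφ
  have h1 : ∀ i, (fun y : En n => fderiv ℝ (fun z => φ (z, t)) y (eb n i))
      = fun y => (Grf φ (y, t)) (eb n i) := by
    intro i; funext y; rw [fderiv_slice (hφ.differentiable (by simp))]
  unfold vlap Lapf
  refine Finset.sum_congr rfl (fun i _ => ?_)
  rw [h1 i]
  have h2 : (fun y : En n => (Grf φ (y, t)) (eb n i))
      = fun y => (ContinuousLinearMap.apply ℝ F (eb n i)) (Grf φ (y, t)) := by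
    funext y; simp
  have h3 : HasFDerivAt (Grf φ ∘ fun y : En n => (y, t))
      ((fderiv ℝ (Grf φ) (x, t)).comp (Jc n)) x :=
    ((hG.differentiable (by simp) (x, t)).hasFDerivAt).comp x (hasFDerivAt_fix_snd t x)
  have h4 : HasFDerivAt (fun y : En n => (ContinuousLinearMap.apply ℝ F (eb n i)) (Grf φ (y, t)))
      ((ContinuousLinearMap.apply ℝ F (eb n i)).comp ((fderiv ℝ (Grf φ) (x, t)).comp (Jc n))) x :=
    (ContinuousLinearMap.apply ℝ F (eb n i)).hasFDerivAt.comp x h3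
  rw [h2, h4.fderiv]
  simp

lemma fderiv_shift (hφ : Differentiable ℝ φ) (c p : En n × ℝ) :
    fderiv ℝ (fun y => φ (y + c)) p = fderiv ℝ φ (p + c) := by
  have : HasFDerivAt (fun y : En n × ℝ => φ (y + c)) (fderiv ℝ φ (p + c)) p := by
    have := (hφ (p + c)).hasFDerivAt.comp p ((hasFDerivAt_id p).add_const c)
    simpa [Function.comp_def] using this
  exact this.fderiv

end lems

section lems2
variable {F : Type*} [NormedAddCommGroup F] [NormedSpace ℝ F] {φ : En n × ℝ → F}

lemma continuous_Dtf (hφ : ContDiff ℝ (⊤ : ℕ∞) φ) : Continuous (Dtf φ) :=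
  (hφ.continuous_fderiv (by simp)).clm_apply continuous_const

lemma continuous_Lapf (hφ : ContDiff ℝ (⊤ : ℕ∞) φ) : Continuous (Lapf φ) := by
  have h : Continuous (fderiv ℝ (Grf φ)) := (contDiff_Grf hφ).continuous_fderiv (by simp)
  exact continuous_finset_sum _ fun i _ =>
    ((h.clm_comp_const (Jc n)).clm_apply continuous_const).clm_apply continuous_const

lemma fderiv_eq_zero_of_nmem {G : Type*} [NormedAddCommGroup G] [NormedSpace ℝ G]
    {E : Type*} [NormedAddCommGroup E] [NormedSpace ℝ E]
    {f : E → G} {p : E} (hp : p ∉ tsupport f) : fderiv ℝ f p = 0 := by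
  by_contra h
  exact hp (support_fderiv_subset ℝ (Function.mem_support.2 h))

lemma support_Dtf {p : En n × ℝ} (hp : p ∉ tsupport φ) : Dtf φ p = 0 := by
  simp [Dtf, fderiv_eq_zero_of_nmem hp]

lemma support_Grf {p : En n × ℝ} (hp : p ∉ tsupport φ) : Grf φ p = 0 := by
  simp [Grf, fderiv_eq_zero_of_nmem hp]

lemma tsupport_Grf_subset : tsupport (Grf φ) ⊆ tsupport φ :=
  closure_minimal (fun p hp => by
    by_contra h
    exact hp (by simp [support_Grf h] : Grf φ p = 0)) isClosed_closure

lemma support_Lapf {p : En n × ℝ} (hp : p ∉ tsupport φ) : Lapf φ p = 0 := by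
  have : fderiv ℝ (Grf φ) p = 0 :=
    fderiv_eq_zero_of_nmem (fun h => hp (tsupport_Grf_subset h))
  simp [Lapf, this]

omit [NormedSpace ℝ F] in
lemma support_φ_zero {p : En n × ℝ} (hp : p ∉ tsupport φ) : φ p = 0 :=
  image_eq_zero_of_notMem_tsupport hp

-- shift lemmas
lemma Dtf_shift (hφ : ContDiff ℝ (⊤ : ℕ∞) φ) (c : En n × ℝ) (p : En n × ℝ) :
    Dtf (fun y => φ (y + c)) p = Dtf φ (p + c) := by
  simp only [Dtf, fderiv_shift (hφ.differentiable (by simp)) c p]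

lemma Grf_shift (hφ : ContDiff ℝ (⊤ : ℕ∞) φ) (c : En n × ℝ) :
    Grf (fun y => φ (y + c)) = fun p => Grf φ (p + c) := by
  funext p; simp only [Grf, fderiv_shift (hφ.differentiable (by simp)) c p]

lemma Lapf_shift (hφ : ContDiff ℝ (⊤ : ℕ∞) φ) (c : En n × ℝ) (p : En n × ℝ) :
    Lapf (fun y => φ (y + c)) p = Lapf φ (p + c) := by
  have hG : ContDiff ℝ (⊤ : ℕ∞) (Grf φ) := contDiff_Grf hφ
  simp only [Lapf, Grf_shift hφ c, fderiv_shift (hG.differentiable (by simp)) c p]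

lemma contDiff_shift (hφ : ContDiff ℝ (⊤ : ℕ∞) φ) (c : En n × ℝ) :
    ContDiff ℝ (⊤ : ℕ∞) (fun y => φ (y + c)) :=
  hφ.comp (contDiff_id.add contDiff_const)

lemma deriv_slice_shift (hφ : ContDiff ℝ (⊤ : ℕ∞) φ) (c : En n × ℝ) (x : En n) (t : ℝ) :
    deriv (fun s => φ ((x, s) + c)) t = Dtf φ ((x, t) + c) := by
  have := deriv_slice (contDiff_shift hφ c) x t
  rw [this, Dtf_shift hφ c]

lemma vlap_slice_shift (hφ : ContDiff ℝ (⊤ : ℕ∞) φ) (c : En n × ℝ) (x : En n) (t : ℝ) :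
    vlap (fun y => φ ((y, t) + c)) x = Lapf φ ((x, t) + c) := by
  have := vlap_slice (contDiff_shift hφ c) x t
  rw [this, Lapf_shift hφ c]

end lems2

set_option maxHeartbeats 2000000 in
/-- **Proposition A.2**: extension of the weak initial-value identity to test functions supported up to the boundary, vanishing on {xₙ = 0} ∪ {t = T}. -/
theorem stokes_weakform_extension
    (n : ℕ) (hn : 2 ≤ n) (T : ℝ) (hT : 0 < T)
    (γ : ℝ) (hγ0 : 0 ≤ γ) (hγ1 : γ < 1/2)
    (v : En n → ℝ → En n) (q : En n → ℝ → ℝ)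
    -- v ∈ C^{2,1}, ∇q ∈ C : existence of the derivatives
    (hv1 : ∀ t ∈ Ioc 0 T, ∀ x ∈ openHalf n hn, DifferentiableAt ℝ (fun y => v y t) x)
    (hv2 : ∀ t ∈ Ioc 0 T, ∀ x ∈ openHalf n hn,
        DifferentiableAt ℝ (fun y => fderiv ℝ (fun z => v z t) y) x)
    (hv3 : ∀ t ∈ Ioc 0 T, ∀ x ∈ closedHalf n hn, DifferentiableAt ℝ (fun s => v x s) t)
    (hq1 : ∀ t ∈ Ioc 0 T, ∀ x ∈ openHalf n hn, DifferentiableAt ℝ (fun y => q y t) x)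
    -- continuity of v, ∇v, ∇²v, ∂ₜv, ∇q on {xₙ ≥ 0} × (0,T]
    (hc0 : ContinuousOn (fun p : En n × ℝ => v p.1 p.2) (closedHalf n hn ×ˢ Ioc 0 T))
    (hc1 : ContinuousOn (fun p : En n × ℝ => fderiv ℝ (fun y => v y p.2) p.1)
        (closedHalf n hn ×ˢ Ioc 0 T))
    (hc2 : ContinuousOn
        (fun p : En n × ℝ => fderiv ℝ (fun y => fderiv ℝ (fun z => v z p.2) y) p.1)
        (closedHalf n hn ×ˢ Ioc 0 T))
    (hc3 : ContinuousOn (fun p : En n × ℝ => deriv (fun s => v p.1 s) p.2)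
        (closedHalf n hn ×ˢ Ioc 0 T))
    (hc4 : ContinuousOn (fun p : En n × ℝ => gradient (fun y => q y p.2) p.1)
        (closedHalf n hn ×ˢ Ioc 0 T))
    -- (i) the Stokes equations ∂ₜv − Δv + ∇q = 0, div v = 0 on ℝⁿ₊ × (0,T]
    (heq : ∀ t ∈ Ioc 0 T, ∀ x ∈ openHalf n hn,
        deriv (fun s => v x s) t - vlap (fun y => v y t) x + gradient (fun y => q y t) x = 0)
    (hdiv : ∀ t ∈ Ioc 0 T, ∀ x ∈ openHalf n hn, vdiv (fun y => v y t) x = 0)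
    -- (ii) the Dirichlet boundary condition
    (hbc : ∀ t ∈ Ioc 0 T, ∀ x : En n, xlast n hn x = 0 → v x t = 0)
    -- (iii) sup_{0<t≤T} t^γ ‖v‖_∞ < ∞
    (hv4 : ∃ C : ℝ, ∀ t ∈ Ioc 0 T, ∀ x ∈ openHalf n hn, t ^ γ * ‖v x t‖ ≤ C)
    -- (iv) sup t^{γ+1/2} (xₙ² + t)^{1/2} |∇q| < ∞
    (hq2 : ∃ C : ℝ, ∀ t ∈ Ioc 0 T, ∀ x ∈ openHalf n hn,
        t ^ (γ + 1/2) * (xlast n hn x ^ 2 + t) ^ ((1 : ℝ)/2)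
          * ‖gradient (fun y => q y t) x‖ ≤ C)
    -- (v) ∇v(·,t) is bounded for each t ∈ (0,T)
    (hv5 : ∀ t ∈ Ioo (0 : ℝ) T, ∃ B : ℝ, ∀ x ∈ openHalf n hn,
        ‖fderiv ℝ (fun y => v y t) x‖ ≤ B)
    -- (vi) the weak form of the initial condition
    (hweak : ∀ φ : En n × ℝ → En n, ContDiff ℝ (⊤ : ℕ∞) φ → HasCompactSupport φ →
        tsupport φ ⊆ openHalf n hn ×ˢ Iio T →
        ∫ t in Ioo (0 : ℝ) T, ∫ x in openHalf n hn,
          ((inner ℝ (v x t) (deriv (fun s => φ (x, s)) t + vlap (fun y => φ (y, t)) x) : ℝ)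
            - (inner ℝ (gradient (fun y => q y t) x) (φ (x, t)) : ℝ)) = 0) :
    ∀ φ : En n × ℝ → En n, ContDiff ℝ (⊤ : ℕ∞) φ → HasCompactSupport φ →
      tsupport φ ⊆ closedHalf n hn ×ˢ Icc 0 T →
      (∀ x : En n, ∀ t : ℝ, xlast n hn x = 0 → φ (x, t) = 0) →
      (∀ x : En n, φ (x, T) = 0) →
      ∫ t in Ioo (0 : ℝ) T, ∫ x in openHalf n hn,
        ((inner ℝ (v x t) (deriv (fun s => φ (x, s)) t + vlap (fun y => φ (y, t)) x) : ℝ)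
          - (inner ℝ (gradient (fun y => q y t) x) (φ (x, t)) : ℝ)) = 0 := by
  intro φ hφ hφs hsupp hφ0 hφT
  classical
  obtain ⟨Cv, hCv⟩ := hv4
  obtain ⟨Cq, hCq⟩ := hq2
  set e : En n := eb n (lastIdx n hn) with he_def
  have hxle : ∀ (x : En n) (a : ℝ), xlast n hn (x + a • e) = xlast n hn x + a := by
    intro x a
    simp [xlast, he_def, eb, EuclideanSpace.single_apply]
  have hne : ‖e‖ = 1 := by simp [he_def, eb]
  set cv : ℝ → En n × ℝ := fun ε => (-(ε • e), ε) with hcv_def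
  have hppt : ∀ (ε : ℝ) (x : En n) (t : ℝ), ((x, t) + cv ε) = (x + -(ε • e), t + ε) := by
    intro ε x t; rfl
  set F : ℝ → En n → ℝ → ℝ := fun ε x t =>
    (inner ℝ (v x t) (Dtf φ ((x, t) + cv ε) + Lapf φ ((x, t) + cv ε)) : ℝ)
      - (inner ℝ (gradient (fun y => q y t) x) (φ ((x, t) + cv ε)) : ℝ) with hF_def
  -- nonnegative constants
  have hCv0 : 0 ≤ Cv := by
    have h1 : e ∈ openHalf n hn := by
      have h00 : xlast n hn (0 : En n) = 0 := by simp [xlast]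
      have := hxle 0 1
      simp only [one_smul, zero_add] at this
      simp only [openHalf, mem_setOf_eq, this, h00]
      norm_num
    refine le_trans ?_ (hCv T ⟨hT, le_refl T⟩ e h1)
    positivity
  have hCq0 : 0 ≤ Cq := by
    have h1 : e ∈ openHalf n hn := by
      have h00 : xlast n hn (0 : En n) = 0 := by simp [xlast]
      have := hxle 0 1
      simp only [one_smul, zero_add] at this
      simp only [openHalf, mem_setOf_eq, this, h00]
      norm_num
    refine le_trans ?_ (hCq T ⟨hT, le_refl T⟩ e h1)
    positivity
  -- bound on the derivatives of φ
  have hDlc : Continuous (fun p => Dtf φ p + Lapf φ p) :=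
    (continuous_Dtf hφ).add (continuous_Lapf hφ)
  have hDlcs : HasCompactSupport (fun p => Dtf φ p + Lapf φ p) :=
    HasCompactSupport.intro hφs (fun p hp => by
      simp [support_Dtf hp, support_Lapf hp])
  obtain ⟨M, hM⟩ := hDlcs.exists_bound_of_continuous hDlc
  have hM0 : 0 ≤ M := le_trans (norm_nonneg _) (hM (0, 0))
  -- Lipschitz constant of φ
  obtain ⟨Lc, hLc⟩ := ContDiff.lipschitzWith_of_hasCompactSupport hφs hφ (by simp)
  set L : ℝ := (Lc : ℝ) with hL_def
  have hL0 : 0 ≤ L := Lc.coe_nonneg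
  have hLip : ∀ p p' : En n × ℝ, ‖φ p - φ p'‖ ≤ L * dist p p' := by
    intro p p'; rw [← dist_eq_norm]; exact hLc.dist_le_mul p p'
  -- compact set containing all supports
  have hK1 : IsCompact (Prod.fst '' tsupport φ) := hφs.image continuous_fst
  set Kx : Set (En n) := Metric.cthickening 1 (Prod.fst '' tsupport φ) with hKx_def
  have hKxc : IsCompact Kx := hK1.cthickening
  have hKxm : MeasurableSet Kx := hKxc.isClosed.measurableSet
  -- measurability of the half space
  have hxlc : Continuous (fun x : En n => xlast n hn x) := by
    exact (EuclideanSpace.proj (lastIdx n hn)).continuous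
  have hopen_meas : MeasurableSet (openHalf n hn) :=
    (isOpen_Ioi.preimage hxlc).measurableSet
  -- the dominating function
  set Cb : ℝ → ℝ := fun t => Cv * M * t ^ (-γ) + Cq * L * t ^ (-(γ + 1/2)) with hCb_def
  have hCb0 : ∀ t : ℝ, 0 < t → 0 ≤ Cb t := by
    intro t ht; unfold Cb; positivity
  -- the weak identity for shifted test functions
  have hwk : ∀ ε : ℝ, 0 < ε → ε ≤ 1 →
      ∫ t in Ioo (0:ℝ) T, ∫ x in openHalf n hn, F ε x t = 0 := by
    intro ε hε hε1
    have hψ : ContDiff ℝ (⊤ : ℕ∞) (fun p : En n × ℝ => φ (p + cv ε)) := contDiff_shift hφ _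
    have hψs : HasCompactSupport (fun p : En n × ℝ => φ (p + cv ε)) :=
      hφs.comp_homeomorph (Homeomorph.addRight (cv ε))
    have hψsup : tsupport (fun p : En n × ℝ => φ (p + cv ε)) ⊆ openHalf n hn ×ˢ Iio T := by
      have h1 : tsupport (fun p : En n × ℝ => φ (p + cv ε))
          ⊆ (fun p : En n × ℝ => p + cv ε) ⁻¹' tsupport φ :=
        closure_minimal (fun p hp => mem_preimage.2 (subset_closure hp))
          (isClosed_closure.preimage (continuous_id.add continuous_const))
      intro p hp
      have h2 := hsupp (h1 hp)
      have h3 : 0 ≤ xlast n hn (p.1 + -(ε • e)) := h2.1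
      have h4 : p.2 + ε ≤ T := h2.2.2
      have h5 : xlast n hn (p.1 + -(ε • e)) = xlast n hn p.1 + -ε := by
        rw [← neg_smul]; exact hxle p.1 (-ε)
      constructor
      · show 0 < xlast n hn p.1
        rw [h5] at h3; linarith
      · show p.2 < T
        linarith
    have h0 := hweak _ hψ hψs hψsup
    simp only [deriv_slice_shift hφ (cv ε), vlap_slice_shift hφ (cv ε)] at h0
    simp only [hF_def]
    exact h0
  -- pointwise bound
  have hptb : ∀ ε : ℝ, 0 ≤ ε → ε ≤ 1 → ∀ t ∈ Ioc (0:ℝ) T, ∀ x ∈ openHalf n hn,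
      ‖F ε x t‖ ≤ Kx.indicator (fun _ => Cb t) x := by
    intro ε hε0 hε1 t ht x hx
    by_cases hxK : x ∈ Kx
    · rw [indicator_of_mem hxK]
      have hxn0 : 0 < xlast n hn x := hx
      have hv' : ‖v x t‖ ≤ Cv * t ^ (-γ) := by
        have h1 := hCv t ht x hx
        have h2 : (0:ℝ) < t ^ γ := Real.rpow_pos_of_pos ht.1 γ
        rw [Real.rpow_neg ht.1.le, ← div_eq_mul_inv, le_div_iff₀ h2]
        nlinarith [h1]
      have hterm1 : ‖(inner ℝ (v x t) (Dtf φ ((x,t) + cv ε) + Lapf φ ((x,t) + cv ε)) : ℝ)‖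
          ≤ Cv * M * t ^ (-γ) := by
        calc ‖(inner ℝ (v x t) (Dtf φ ((x,t) + cv ε) + Lapf φ ((x,t) + cv ε)) : ℝ)‖
            ≤ ‖v x t‖ * ‖Dtf φ ((x,t) + cv ε) + Lapf φ ((x,t) + cv ε)‖ :=
              norm_inner_le_norm _ _
          _ ≤ (Cv * t ^ (-γ)) * M :=
              mul_le_mul hv' (hM _) (norm_nonneg _) (mul_nonneg hCv0 (Real.rpow_nonneg ht.1.le _))
          _ = Cv * M * t ^ (-γ) := by ring
      have hterm2 : ‖(inner ℝ (gradient (fun y => q y t) x) (φ ((x,t) + cv ε)) : ℝ)‖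
          ≤ Cq * L * t ^ (-(γ + 1/2)) := by
        by_cases hxe : xlast n hn x < ε
        · have hnot : ((x,t) + cv ε) ∉ tsupport φ := by
            intro hmem
            have h2 : (0:ℝ) ≤ xlast n hn (x + -(ε • e)) := (hsupp hmem).1
            have h5 : xlast n hn (x + -(ε • e)) = xlast n hn x + -ε := by
              rw [← neg_smul]; exact hxle x (-ε)
            rw [h5] at h2; linarith
          rw [support_φ_zero hnot]
          simp only [inner_zero_right, norm_zero]
          exact mul_nonneg (mul_nonneg hCq0 hL0) (Real.rpow_nonneg ht.1.le _)
        · push_neg at hxe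
          have hφb : ‖φ ((x,t) + cv ε)‖ ≤ L * xlast n hn x := by
            have hz : φ (x + -(xlast n hn x • e), t + ε) = 0 := by
              apply hφ0
              rw [← neg_smul, hxle x (-(xlast n hn x))]; ring
            have hdd : (x + -(ε • e)) - (x + -(xlast n hn x • e))
                = (xlast n hn x - ε) • e := by
              rw [sub_smul]; abel
            calc ‖φ ((x,t) + cv ε)‖
                = ‖φ (x + -(ε • e), t + ε) - φ (x + -(xlast n hn x • e), t + ε)‖ := by
                  rw [hppt, hz, sub_zero]
              _ ≤ L * dist ((x + -(ε • e), t + ε) : En n × ℝ)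
                    ((x + -(xlast n hn x • e), t + ε) : En n × ℝ) := hLip _ _
              _ = L * (xlast n hn x - ε) := by
                  rw [Prod.dist_eq]
                  simp only [dist_self]
                  rw [max_eq_left dist_nonneg, dist_eq_norm, hdd, norm_smul, hne]
                  rw [Real.norm_eq_abs, abs_of_nonneg (by linarith), mul_one]
              _ ≤ L * xlast n hn x := by nlinarith
          have hq' := hCq t ht x hx
          have hxt : (0:ℝ) < xlast n hn x ^ 2 + t := by nlinarith [ht.1]
          have hS : xlast n hn x ≤ (xlast n hn x ^ 2 + t) ^ ((1:ℝ)/2) := by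
            rw [← Real.sqrt_eq_rpow]
            exact (Real.le_sqrt hxn0.le (by positivity)).2 (by nlinarith [ht.1])
          have htp : (0:ℝ) < t ^ (γ + 1/2) := Real.rpow_pos_of_pos ht.1 _
          calc ‖(inner ℝ (gradient (fun y => q y t) x) (φ ((x,t) + cv ε)) : ℝ)‖
              ≤ ‖gradient (fun y => q y t) x‖ * ‖φ ((x,t) + cv ε)‖ :=
                norm_inner_le_norm _ _
            _ ≤ ‖gradient (fun y => q y t) x‖ * (L * xlast n hn x) :=
                mul_le_mul_of_nonneg_left hφb (norm_nonneg _)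
            _ = L * (xlast n hn x * ‖gradient (fun y => q y t) x‖) := by ring
            _ ≤ L * ((xlast n hn x ^ 2 + t) ^ ((1:ℝ)/2) * ‖gradient (fun y => q y t) x‖) :=
                mul_le_mul_of_nonneg_left
                  (mul_le_mul_of_nonneg_right hS (norm_nonneg _)) hL0
            _ ≤ L * (Cq / t ^ (γ + 1/2)) := by
                refine mul_le_mul_of_nonneg_left ?_ hL0
                rw [le_div_iff₀ htp]
                calc (xlast n hn x ^ 2 + t) ^ ((1:ℝ)/2)
                      * ‖gradient (fun y => q y t) x‖ * t ^ (γ + 1/2)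
                    = t ^ (γ + 1/2) * (xlast n hn x ^ 2 + t) ^ ((1:ℝ)/2)
                      * ‖gradient (fun y => q y t) x‖ := by ring
                  _ ≤ Cq := hq'
            _ = Cq * L * t ^ (-(γ + 1/2)) := by
                rw [Real.rpow_neg ht.1.le]; field_simp
        
      calc ‖F ε x t‖
          ≤ ‖(inner ℝ (v x t) (Dtf φ ((x,t) + cv ε) + Lapf φ ((x,t) + cv ε)) : ℝ)‖
            + ‖(inner ℝ (gradient (fun y => q y t) x) (φ ((x,t) + cv ε)) : ℝ)‖ := by
            simp only [hF_def]; exact norm_sub_le _ _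
        _ ≤ Cv * M * t ^ (-γ) + Cq * L * t ^ (-(γ + 1/2)) := add_le_add hterm1 hterm2
        _ = Cb t := by simp only [hCb_def]
    · rw [indicator_of_notMem hxK]
      have hnot : ((x,t) + cv ε) ∉ tsupport φ := by
        intro hmem
        apply hxK
        rw [hKx_def]
        refine mem_cthickening_of_dist_le x (x + -(ε • e)) 1 _
          ⟨((x,t) + cv ε), hmem, rfl⟩ ?_
        rw [dist_eq_norm]
        have : x - (x + -(ε • e)) = ε • e := by abel
        rw [this, norm_smul, hne, Real.norm_eq_abs, abs_of_nonneg hε0, mul_one]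
        exact hε1
      have hz : F ε x t = 0 := by
        simp [hF_def, support_Dtf hnot, support_Lapf hnot, support_φ_zero hnot]
      rw [hz]; simp
  -- continuity in x
  have hof : openHalf n hn ⊆ closedHalf n hn := by
    intro x hx
    have hx' : 0 < xlast n hn x := hx
    exact (le_of_lt hx' : x ∈ closedHalf n hn)
  have hmx : ∀ (ε : ℝ), ∀ t ∈ Ioc (0:ℝ) T,
      ContinuousOn (fun x => F ε x t) (openHalf n hn) := by
    intro ε t ht
    have hmap : MapsTo (fun x : En n => (x, t)) (openHalf n hn)
        (closedHalf n hn ×ˢ Ioc 0 T) := fun x hx => ⟨hof hx, ht⟩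
    have hvx : ContinuousOn (fun x : En n => v x t) (openHalf n hn) :=
      hc0.comp ((continuous_id.prodMk continuous_const).continuousOn) hmap
    have hqx : ContinuousOn (fun x : En n => gradient (fun y => q y t) x)
        (openHalf n hn) :=
      hc4.comp ((continuous_id.prodMk continuous_const).continuousOn) hmap
    have hshift : Continuous (fun x : En n => ((x, t) + cv ε)) :=
      (continuous_id.prodMk continuous_const).add continuous_const
    simp only [hF_def]
    exact (hvx.inner (((continuous_Dtf hφ).add (continuous_Lapf hφ)).comp
        hshift).continuousOn).sub
      (hqx.inner ((hφ.continuous.comp hshift).continuousOn))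
  have hmxa : ∀ (ε : ℝ), ∀ t ∈ Ioc (0:ℝ) T,
      AEStronglyMeasurable (fun x => F ε x t) (volume.restrict (openHalf n hn)) :=
    fun ε t ht => (hmx ε t ht).aestronglyMeasurable hopen_meas
  -- integrability of the x-bound
  have hbx : ∀ c : ℝ, Integrable (Kx.indicator (fun _ => c))
      (volume.restrict (openHalf n hn)) := by
    intro c
    refine (integrable_indicator_iff hKxm).2 (integrableOn_const (lt_top_iff_ne_top.1 ?_))
    exact lt_of_le_of_lt (Measure.restrict_apply_le _ _) hKxc.measure_lt_top
  -- the sequence of shifts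
  set εs : ℕ → ℝ := fun k => 1 / (k + 1) with hεs_def
  have hεs_pos : ∀ k : ℕ, 0 < εs k := by intro k; positivity
  have hεs_le1 : ∀ k : ℕ, εs k ≤ 1 := by
    intro k
    rw [hεs_def]
    rw [div_le_one (by positivity)]
    norm_num
  have hεs_tendsto : Tendsto εs atTop (𝓝 0) := tendsto_one_div_add_atTop_nhds_zero_nat
  -- inner limit
  have hlim_inner : ∀ t ∈ Ioc (0:ℝ) T,
      Tendsto (fun k => ∫ x in openHalf n hn, F (εs k) x t) atTop
        (𝓝 (∫ x in openHalf n hn, F 0 x t)) := by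
    intro t ht
    apply tendsto_integral_of_dominated_convergence (Kx.indicator fun _ => Cb t)
    · intro k; exact hmxa (εs k) t ht
    · exact hbx _
    · intro k
      exact (ae_restrict_iff' hopen_meas).2 (Eventually.of_forall fun x hx =>
        hptb (εs k) (hεs_pos k).le (hεs_le1 k) t ht x hx)
    · refine Eventually.of_forall (fun x => ?_)
      have hc : Tendsto (fun k => ((x, t) : En n × ℝ) + cv (εs k)) atTop
          (𝓝 (((x, t) : En n × ℝ) + cv 0)) := by
        refine tendsto_const_nhds.add ?_
        exact ((hεs_tendsto.smul_const e).neg).prodMk_nhds hεs_tendsto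
      simp only [hF_def]
      exact (Tendsto.inner tendsto_const_nhds
          ((((continuous_Dtf hφ).tendsto _).comp hc).add
            (((continuous_Lapf hφ).tendsto _).comp hc))).sub
        (Tendsto.inner tendsto_const_nhds ((hφ.continuous.tendsto _).comp hc))
  -- outer continuity
  have hcont_out : ∀ ε : ℝ, 0 ≤ ε → ε ≤ 1 →
      ContinuousOn (fun t => ∫ x in openHalf n hn, F ε x t) (Ioo 0 T) := by
    intro ε hε0 hε1 t₀ ht₀
    have hδ : (0:ℝ) < t₀ / 2 := by linarith [ht₀.1]
    have hsub : Ioo (t₀/2) T ⊆ Ioc (0:ℝ) T := fun s hs => ⟨lt_trans hδ hs.1, hs.2.le⟩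
    have hco : ContinuousOn (fun t => ∫ x in openHalf n hn, F ε x t) (Ioo (t₀/2) T) := by
      apply continuousOn_of_dominated (bound := Kx.indicator fun _ =>
          Cv * M * (t₀/2) ^ (-γ) + Cq * L * (t₀/2) ^ (-(γ + 1/2)))
      · intro t htm; exact hmxa ε t (hsub htm)
      · intro t htm
        refine (ae_restrict_iff' hopen_meas).2 (Eventually.of_forall fun x hx => ?_)
        refine (hptb ε hε0 hε1 t (hsub htm) x hx).trans ?_
        by_cases hxK : x ∈ Kx
        · rw [indicator_of_mem hxK, indicator_of_mem hxK]
          have e1 : t ^ (-γ) ≤ (t₀/2) ^ (-γ) :=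
            Real.rpow_le_rpow_of_nonpos hδ htm.1.le (by linarith)
          have e2 : t ^ (-(γ+1/2)) ≤ (t₀/2) ^ (-(γ+1/2)) :=
            Real.rpow_le_rpow_of_nonpos hδ htm.1.le (by linarith)
          have f1 := mul_le_mul_of_nonneg_left e1 (mul_nonneg hCv0 hM0)
          have f2 := mul_le_mul_of_nonneg_left e2 (mul_nonneg hCq0 hL0)
          simp only [hCb_def]
          linarith
        · rw [indicator_of_notMem hxK, indicator_of_notMem hxK]
      · exact hbx _
      · refine (ae_restrict_iff' hopen_meas).2 (Eventually.of_forall fun x hx => ?_)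
        have hvt : ContinuousOn (fun s : ℝ => v x s) (Ioo (t₀/2) T) :=
          hc0.comp ((continuous_const.prodMk continuous_id).continuousOn)
            (fun s hs => ⟨hof hx, hsub hs⟩)
        have hqt : ContinuousOn (fun s : ℝ => gradient (fun y => q y s) x)
            (Ioo (t₀/2) T) :=
          hc4.comp ((continuous_const.prodMk continuous_id).continuousOn)
            (fun s hs => ⟨hof hx, hsub hs⟩)
        have hshift : Continuous (fun s : ℝ => ((x, s) : En n × ℝ) + cv ε) :=
          (continuous_const.prodMk continuous_id).add continuous_const
        simp only [hF_def]
        exact (hvt.inner (((continuous_Dtf hφ).add (continuous_Lapf hφ)).comp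
            hshift).continuousOn).sub
          (hqt.inner ((hφ.continuous.comp hshift).continuousOn))
    have hmem : Ioo (t₀/2) T ∈ 𝓝 t₀ := Ioo_mem_nhds (by linarith [ht₀.1]) ht₀.2
    exact ((hco t₀ ⟨by linarith [ht₀.1], ht₀.2⟩).continuousAt hmem).continuousWithinAt
  -- integrability of the outer bound
  set Vol : ℝ := (volume Kx).toReal with hVol_def
  have hVol0 : 0 ≤ Vol := ENNReal.toReal_nonneg
  have hb_out : IntegrableOn (fun t => Vol * Cb t) (Ioo 0 T) := by
    have h1 : IntegrableOn (fun t : ℝ => t ^ (-γ)) (Ioc 0 T) :=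
      (intervalIntegrable_rpow' (by linarith)).1
    have h2 : IntegrableOn (fun t : ℝ => t ^ (-(γ + 1/2))) (Ioc 0 T) :=
      (intervalIntegrable_rpow' (by linarith)).1
    have h3 : IntegrableOn Cb (Ioo 0 T) :=
      (((h1.mono_set Ioo_subset_Ioc_self).const_mul (Cv * M)).add
        ((h2.mono_set Ioo_subset_Ioc_self).const_mul (Cq * L)))
    exact h3.const_mul Vol
  -- outer bound
  have hout_bd : ∀ ε : ℝ, 0 ≤ ε → ε ≤ 1 → ∀ t ∈ Ioo (0:ℝ) T,
      ‖∫ x in openHalf n hn, F ε x t‖ ≤ Vol * Cb t := by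
    intro ε hε0 hε1 t htm
    have ht : t ∈ Ioc (0:ℝ) T := ⟨htm.1, htm.2.le⟩
    calc ‖∫ x in openHalf n hn, F ε x t‖
        ≤ ∫ x in openHalf n hn, Kx.indicator (fun _ => Cb t) x :=
          norm_integral_le_of_norm_le (hbx _)
            ((ae_restrict_iff' hopen_meas).2
              (Eventually.of_forall fun x hx => hptb ε hε0 hε1 t ht x hx))
      _ = ((volume.restrict (openHalf n hn)) Kx).toReal * Cb t := by
          rw [integral_indicator_const _ hKxm]; simp [smul_eq_mul, Measure.real]
      _ ≤ Vol * Cb t := by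
          refine mul_le_mul_of_nonneg_right ?_ (hCb0 t htm.1)
          exact ENNReal.toReal_mono hKxc.measure_lt_top.ne (Measure.restrict_apply_le _ _)
  -- the main limit
  have hmain : Tendsto (fun k => ∫ t in Ioo (0:ℝ) T, ∫ x in openHalf n hn, F (εs k) x t)
      atTop (𝓝 (∫ t in Ioo (0:ℝ) T, ∫ x in openHalf n hn, F 0 x t)) := by
    apply tendsto_integral_of_dominated_convergence (fun t => Vol * Cb t)
    · intro k
      exact (hcont_out (εs k) (hεs_pos k).le (hεs_le1 k)).aestronglyMeasurable
        measurableSet_Ioo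
    · exact hb_out
    · intro k
      exact (ae_restrict_iff' measurableSet_Ioo).2
        (Eventually.of_forall fun t htm => hout_bd (εs k) (hεs_pos k).le (hεs_le1 k) t htm)
    · exact (ae_restrict_iff' measurableSet_Ioo).2
        (Eventually.of_forall fun t htm => hlim_inner t ⟨htm.1, htm.2.le⟩)
  have hres : ∫ t in Ioo (0:ℝ) T, ∫ x in openHalf n hn, F 0 x t = 0 := by
    have hz : (fun k => ∫ t in Ioo (0:ℝ) T, ∫ x in openHalf n hn, F (εs k) x t)
        = fun _ => (0:ℝ) := by
      funext k; exact hwk (εs k) (hεs_pos k) (hεs_le1 k)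
    rw [hz] at hmain
    exact tendsto_nhds_unique hmain tendsto_const_nhds
  -- identify the goal with ∫∫ F 0
  have h00 : ∀ (x : En n) (t : ℝ), ((x, t) : En n × ℝ) + cv 0 = (x, t) := by
    intro x t
    rw [hppt]
    simp
  simp only [deriv_slice hφ, vlap_slice hφ]
  have hFeq : ∀ (x : En n) (t : ℝ),
      (inner ℝ (v x t) (Dtf φ (x, t) + Lapf φ (x, t)) : ℝ)
        - (inner ℝ (gradient (fun y => q y t) x) (φ (x, t)) : ℝ) = F 0 x t := by
    intro x t
    simp only [hF_def, h00]
  simp only [hFeq]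
  exact hres
end
end

section
/- Let n ≥ 2 and let φ : {x ∈ ℝⁿ : xₙ ≥ 0} → ℝ be continuously differentiable with φ(x', 0) = 0 for all x' ∈ ℝⁿ⁻¹. Assume φ ∈ L¹(ℝⁿ₊) and M := sup_{xₙ > 0} ∫_{ℝⁿ⁻¹} |∂φ/∂xₙ(x', xₙ)| dx' < ∞. Then ∫_{ℝⁿ₊} |φ(x)| / xₙ dx ≤ M + ∫_{ℝⁿ₊} |φ(x)| dx; in particular x ↦ φ(x)/xₙ belongs to L¹(ℝⁿ₊). -/
open MeasureTheory Set Metric Filter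

noncomputable section

/-! Since `φ(x', 0) = 0`, the fundamental theorem of calculus gives
`|φ(x', t)| ≤ ∫₀ᵗ |∂ₙφ(x', s)| ds`; integrating in `x'` and exchanging the integrals (Tonelli)
yields `∫ |φ(x', t)| dx' ≤ t M`, so the slab `0 < xₙ < 1` contributes at most `M` to
`∫ |φ| / xₙ`, while on `xₙ ≥ 1` simply `|φ| / xₙ ≤ |φ|`. The estimate is carried out for lower
Lebesgue integrals, where no integrability has to be checked along the way. -/

open scoped ENNReal

theorem enorm_sub_le_setLIntegral_enorm_deriv {F : Type*} [NormedAddCommGroup F]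
    [NormedSpace ℝ F] [CompleteSpace F] {f : ℝ → F} {a b : ℝ} (hab : a < b)
    (hf : ContDiffOn ℝ 1 f (Icc a b)) :
    ‖f b - f a‖ₑ ≤ ∫⁻ s in Ioo a b, ‖deriv f s‖ₑ := by
  have hderiv : ∀ s ∈ Ioo a b, HasDerivAt f (deriv f s) s := fun s hs =>
    ((hf.differentiableOn one_ne_zero).differentiableAt (Icc_mem_nhds hs.1 hs.2)).hasDerivAt
  -- on the interior, `deriv f` agrees with the one-sided derivative, which is continuous up to `a`
  have hint : IntervalIntegrable (deriv f) volume a b := by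
    rw [intervalIntegrable_iff_integrableOn_Ioo_of_le hab.le]
    refine ((hf.continuousOn_derivWithin (uniqueDiffOn_Icc hab) le_rfl).integrableOn_Icc.mono_set
      Ioo_subset_Icc_self).congr_fun (fun s hs => ?_) measurableSet_Ioo
    exact derivWithin_of_mem_nhds (Icc_mem_nhds hs.1 hs.2)
  calc ‖f b - f a‖ₑ = ‖∫ s in Ioo a b, deriv f s‖ₑ := by
        rw [← intervalIntegral.integral_eq_sub_of_hasDerivAt_of_le hab.le hf.continuousOn hderiv
          hint, intervalIntegral.integral_of_le hab.le, integral_Ioc_eq_integral_Ioo]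
    _ ≤ ∫⁻ s in Ioo a b, ‖deriv f s‖ₑ := enorm_integral_le_lintegral_enorm _

theorem isOpen_setOf_snd_pos {E : Type*} [TopologicalSpace E] : IsOpen {p : E × ℝ | 0 < p.2} :=
  isOpen_lt continuous_const continuous_snd

section Slices

variable {E F : Type*} [NormedAddCommGroup E] [NormedSpace ℝ E] [NormedAddCommGroup F]
  [NormedSpace ℝ F] {φ : E × ℝ → F}

theorem contDiffOn_slice (hφ : ContDiffOn ℝ 1 φ {p : E × ℝ | 0 ≤ p.2}) (x : E) :
    ContDiffOn ℝ 1 (fun r => φ (x, r)) (Ici 0) :=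
  hφ.comp (contDiff_const.prodMk contDiff_id).contDiffOn fun _ hr => hr

theorem continuousOn_deriv_slice (hφ : ContDiffOn ℝ 1 φ {p : E × ℝ | 0 ≤ p.2}) :
    ContinuousOn (fun p : E × ℝ => deriv (fun r => φ (p.1, r)) p.2) {p | 0 < p.2} := by
  have hφ' : ContDiffOn ℝ 1 φ {p : E × ℝ | 0 < p.2} := hφ.mono fun p (hp : 0 < p.2) => hp.le
  refine ((hφ'.continuousOn_fderiv_of_isOpen isOpen_setOf_snd_pos le_rfl).clm_apply
    (continuousOn_const (c := ((0 : E), (1 : ℝ))))).congr fun p hp => ?_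
  have hD : DifferentiableAt ℝ φ p :=
    (hφ'.differentiableOn one_ne_zero).differentiableAt (isOpen_setOf_snd_pos.mem_nhds hp)
  exact (hD.hasFDerivAt.comp_hasDerivAt p.2
    ((hasDerivAt_const p.2 p.1).prodMk (hasDerivAt_id p.2))).deriv

end Slices

theorem ContinuousOn.aemeasurable_prod_restrict_Ioo {E : Type*} [TopologicalSpace E]
    [MeasurableSpace E] [OpensMeasurableSpace E] {μ : Measure E} [SFinite μ] {g : E × ℝ → ℝ≥0∞}
    (hg : ContinuousOn g {p | 0 < p.2}) (t : ℝ) :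
    AEMeasurable g (μ.prod (volume.restrict (Ioo 0 t))) := by
  rw [← Measure.restrict_univ (μ := μ), Measure.prod_restrict]
  exact (hg.aemeasurable isOpen_setOf_snd_pos.measurableSet).mono_set fun p hp => hp.2.1

section Hardy

variable {E F : Type*} [NormedAddCommGroup E] [NormedSpace ℝ E] [MeasurableSpace E]
  [OpensMeasurableSpace E] [NormedAddCommGroup F] [NormedSpace ℝ F] [CompleteSpace F]
  {μ : Measure E} [SFinite μ] {φ : E × ℝ → F} {M : ℝ}

theorem lintegral_enorm_slice_le (hφ : ContDiffOn ℝ 1 φ {p : E × ℝ | 0 ≤ p.2})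
    (hbc : ∀ x, φ (x, 0) = 0)
    (hslice : ∀ s : ℝ, 0 < s → Integrable (fun x => deriv (fun r => φ (x, r)) s) μ)
    (hM : ∀ s : ℝ, 0 < s → ∫ x, ‖deriv (fun r => φ (x, r)) s‖ ∂μ ≤ M) {t : ℝ} (ht : 0 < t) :
    ∫⁻ x, ‖φ (x, t)‖ₑ ∂μ ≤ ENNReal.ofReal M * ENNReal.ofReal t := by
  have hftc : ∀ x, ‖φ (x, t)‖ₑ ≤ ∫⁻ s in Ioo 0 t, ‖deriv (fun r => φ (x, r)) s‖ₑ := fun x => by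
    simpa [hbc] using enorm_sub_le_setLIntegral_enorm_deriv ht
      ((contDiffOn_slice hφ x).mono Icc_subset_Ici_self)
  have hmeas : AEMeasurable (Function.uncurry fun x s => ‖deriv (fun r => φ (x, r)) s‖ₑ)
      (μ.prod (volume.restrict (Ioo 0 t))) :=
    (continuousOn_deriv_slice hφ).enorm.aemeasurable_prod_restrict_Ioo t
  calc ∫⁻ x, ‖φ (x, t)‖ₑ ∂μ
      ≤ ∫⁻ x, (∫⁻ s in Ioo 0 t, ‖deriv (fun r => φ (x, r)) s‖ₑ) ∂μ := lintegral_mono hftc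
    _ = ∫⁻ s in Ioo (0 : ℝ) t, ∫⁻ x, ‖deriv (fun r => φ (x, r)) s‖ₑ ∂μ :=
        lintegral_lintegral_swap hmeas
    _ ≤ ∫⁻ _ in Ioo 0 t, ENNReal.ofReal M := setLIntegral_mono' measurableSet_Ioo fun s hs => by
        rw [← ofReal_integral_norm_eq_lintegral_enorm (hslice s hs.1)]
        exact ENNReal.ofReal_le_ofReal (hM s hs.1)
    _ = ENNReal.ofReal M * ENNReal.ofReal t := by simp

theorem setLIntegral_univ_prod_Ioo_enorm_div_snd_le (hφ : ContDiffOn ℝ 1 φ {p : E × ℝ | 0 ≤ p.2})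
    (hbc : ∀ x, φ (x, 0) = 0)
    (hslice : ∀ s : ℝ, 0 < s → Integrable (fun x => deriv (fun r => φ (x, r)) s) μ)
    (hM : ∀ s : ℝ, 0 < s → ∫ x, ‖deriv (fun r => φ (x, r)) s‖ ∂μ ≤ M) :
    ∫⁻ p in univ ×ˢ Ioo 0 1, ‖φ p‖ₑ / ENNReal.ofReal p.2 ∂μ.prod volume ≤ ENNReal.ofReal M := by
  have hmeas : AEMeasurable (fun p : E × ℝ => ‖φ p‖ₑ / ENNReal.ofReal p.2)
      (μ.prod (volume.restrict (Ioo 0 1))) :=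
    ((hφ.continuousOn.mono fun p (hp : 0 < p.2) => hp.le).enorm.aemeasurable_prod_restrict_Ioo
      1).div (ENNReal.measurable_ofReal.comp measurable_snd).aemeasurable
  rw [← Measure.prod_restrict, Measure.restrict_univ, lintegral_prod_symm _ hmeas]
  calc ∫⁻ t in Ioo 0 1, ∫⁻ x, ‖φ (x, t)‖ₑ / ENNReal.ofReal t ∂μ
      ≤ ∫⁻ _ in Ioo (0 : ℝ) 1, ENNReal.ofReal M := by
        refine setLIntegral_mono' measurableSet_Ioo fun t ht => ?_
        simp only [div_eq_mul_inv]
        rw [lintegral_mul_const' _ _ (ENNReal.inv_ne_top.2 (ENNReal.ofReal_pos.2 ht.1).ne'),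
          ← div_eq_mul_inv]
        exact ENNReal.div_le_of_le_mul (lintegral_enorm_slice_le hφ hbc hslice hM ht.1)
    _ = ENNReal.ofReal M := by simp

theorem setLIntegral_snd_pos_enorm_div_snd_le (hφ : ContDiffOn ℝ 1 φ {p : E × ℝ | 0 ≤ p.2})
    (hbc : ∀ x, φ (x, 0) = 0)
    (hslice : ∀ s : ℝ, 0 < s → Integrable (fun x => deriv (fun r => φ (x, r)) s) μ)
    (hM : ∀ s : ℝ, 0 < s → ∫ x, ‖deriv (fun r => φ (x, r)) s‖ ∂μ ≤ M) :
    ∫⁻ p in {p | 0 < p.2}, ‖φ p‖ₑ / ENNReal.ofReal p.2 ∂μ.prod volume ≤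
      ENNReal.ofReal M + ∫⁻ p in {p | 0 < p.2}, ‖φ p‖ₑ ∂μ.prod volume := by
  have hsplit : {p : E × ℝ | 0 < p.2} = univ ×ˢ Ioo 0 1 ∪ {p | 1 ≤ p.2} := by
    ext p
    simp only [mem_ofPred_eq, mem_union, mem_prod, mem_univ, mem_Ioo, true_and]
    constructor
    · intro hp
      exact (lt_or_ge p.2 1).imp (⟨hp, ·⟩) id
    · rintro (⟨hp, -⟩ | hp)
      exacts [hp, one_pos.trans_le hp]
  have hdisj : Disjoint (univ ×ˢ Ioo 0 1) {p : E × ℝ | 1 ≤ p.2} :=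
    Set.disjoint_left.2 fun p hp hp' => hp.2.2.not_ge hp'
  have hfar : MeasurableSet {p : E × ℝ | 1 ≤ p.2} :=
    measurableSet_le measurable_const measurable_snd
  calc ∫⁻ p in {p | 0 < p.2}, ‖φ p‖ₑ / ENNReal.ofReal p.2 ∂μ.prod volume
      = (∫⁻ p in univ ×ˢ Ioo 0 1, ‖φ p‖ₑ / ENNReal.ofReal p.2 ∂μ.prod volume) +
          ∫⁻ p in {p | 1 ≤ p.2}, ‖φ p‖ₑ / ENNReal.ofReal p.2 ∂μ.prod volume := by
        rw [hsplit, lintegral_union hfar hdisj]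
    _ ≤ ENNReal.ofReal M + ∫⁻ p in {p | 1 ≤ p.2}, ‖φ p‖ₑ ∂μ.prod volume := by
        refine add_le_add (setLIntegral_univ_prod_Ioo_enorm_div_snd_le hφ hbc hslice hM)
          (setLIntegral_mono' hfar fun p (hp : 1 ≤ p.2) => ENNReal.div_le_of_le_mul ?_)
        exact le_mul_of_one_le_right' (ENNReal.one_le_ofReal.2 hp)
    _ ≤ ENNReal.ofReal M + ∫⁻ p in {p | 0 < p.2}, ‖φ p‖ₑ ∂μ.prod volume := by
        refine add_le_add_right (lintegral_mono_set fun p hp => ?_) _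
        exact one_pos.trans_le (show (1 : ℝ) ≤ p.2 from hp)

end Hardy

theorem integrable_and_integral_le_of_lintegral_le {α F : Type*} [MeasurableSpace α]
    [NormedAddCommGroup F] {μ : Measure α} {f : α → ℝ} {g : α → F} {c : ℝ} (hc : 0 ≤ c)
    (hf₀ : 0 ≤ᵐ[μ] f) (hf : AEStronglyMeasurable f μ) (hg : Integrable g μ)
    (h : ∫⁻ a, ENNReal.ofReal (f a) ∂μ ≤ ENNReal.ofReal c + ∫⁻ a, ‖g a‖ₑ ∂μ) :
    Integrable f μ ∧ ∫ a, f a ∂μ ≤ c + ∫ a, ‖g a‖ ∂μ := by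
  have hg' : ∫⁻ a, ‖g a‖ₑ ∂μ ≠ ∞ := hg.2.ne
  have hbound : ENNReal.ofReal c + ∫⁻ a, ‖g a‖ₑ ∂μ ≠ ∞ := ENNReal.add_ne_top.2 ⟨by simp, hg'⟩
  refine ⟨⟨hf, (hasFiniteIntegral_iff_ofReal hf₀).2 (h.trans_lt hbound.lt_top)⟩, ?_⟩
  rw [integral_eq_lintegral_of_nonneg_ae hf₀ hf, integral_norm_eq_lintegral_enorm hg.1,
    ← ENNReal.toReal_ofReal hc, ← ENNReal.toReal_add ENNReal.ofReal_ne_top hg']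
  exact ENNReal.toReal_mono hbound h

theorem hardy_inequality_halfspace_general
    (n : ℕ) (φ : En (n - 1) × ℝ → ℝ) (M : ℝ)
    -- φ is C¹ on the closed half space
    (hreg : ContDiffOn ℝ 1 φ {p : En (n - 1) × ℝ | 0 ≤ p.2})
    -- φ(x', 0) = 0
    (hbc : ∀ x : En (n - 1), φ (x, 0) = 0)
    -- φ ∈ L¹(ℝⁿ₊)
    (hL1 : IntegrableOn φ {p : En (n - 1) × ℝ | 0 < p.2})
    -- the slices of ∂ₙφ are integrable with L¹(ℝⁿ⁻¹)-norm uniformly bounded by M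
    (hslice : ∀ s : ℝ, 0 < s →
        Integrable (fun x : En (n - 1) => deriv (fun r => φ (x, r)) s))
    (hM : ∀ s : ℝ, 0 < s →
        ∫ x : En (n - 1), |deriv (fun r => φ (x, r)) s| ≤ M) :
    IntegrableOn (fun p : En (n - 1) × ℝ => |φ p| / p.2) {p : En (n - 1) × ℝ | 0 < p.2} ∧
      ∫ p in {p : En (n - 1) × ℝ | 0 < p.2}, |φ p| / p.2 ≤
        M + ∫ p in {p : En (n - 1) × ℝ | 0 < p.2}, |φ p| := by
  have hM₀ : 0 ≤ M := (integral_nonneg fun _ => abs_nonneg _).trans (hM 1 one_pos)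
  have hlin := setLIntegral_snd_pos_enorm_div_snd_le (μ := volume) hreg hbc hslice hM
  rw [← Measure.volume_eq_prod] at hlin
  have hS : MeasurableSet {p : En (n - 1) × ℝ | 0 < p.2} := isOpen_setOf_snd_pos.measurableSet
  refine integrable_and_integral_le_of_lintegral_le (f := fun p => |φ p| / p.2) hM₀ ?_
    (hL1.1.norm.div₀ continuous_snd.aestronglyMeasurable) hL1 (le_of_eq_of_le ?_ hlin)
  · filter_upwards [ae_restrict_mem hS] with p hp using div_nonneg (abs_nonneg _) (le_of_lt hp)
  · refine setLIntegral_congr_fun hS fun p hp => ?_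
    rw [ENNReal.ofReal_div_of_pos hp, ← Real.enorm_eq_ofReal_abs]

/-- The Hardy-type inequality from the proof of Proposition A.1:
if `φ` is `C¹` on the closed half space `ℝⁿ⁻¹ × [0,∞)`, vanishes on the boundary,
is integrable, and `∂ₙφ ∈ L^∞(ℝ₊; L¹(ℝⁿ⁻¹))` with bound `M`, then
`∫ |φ|/xₙ ≤ M + ∫ |φ|`. -/
theorem hardy_inequality_halfspace
    (n : ℕ) (hn : 2 ≤ n) (φ : En (n - 1) × ℝ → ℝ) (M : ℝ)
    -- φ is C¹ on the closed half space
    (hreg : ContDiffOn ℝ 1 φ {p : En (n - 1) × ℝ | 0 ≤ p.2})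
    -- φ(x', 0) = 0
    (hbc : ∀ x : En (n - 1), φ (x, 0) = 0)
    -- φ ∈ L¹(ℝⁿ₊)
    (hL1 : IntegrableOn φ {p : En (n - 1) × ℝ | 0 < p.2})
    -- the slices of ∂ₙφ are integrable with L¹(ℝⁿ⁻¹)-norm uniformly bounded by M
    (hslice : ∀ s : ℝ, 0 < s →
        Integrable (fun x : En (n - 1) => deriv (fun r => φ (x, r)) s))
    (hM : ∀ s : ℝ, 0 < s →
        ∫ x : En (n - 1), |deriv (fun r => φ (x, r)) s| ≤ M) :
    IntegrableOn (fun p : En (n - 1) × ℝ => |φ p| / p.2) {p : En (n - 1) × ℝ | 0 < p.2} ∧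
      ∫ p in {p : En (n - 1) × ℝ | 0 < p.2}, |φ p| / p.2 ≤
        M + ∫ p in {p : En (n - 1) × ℝ | 0 < p.2}, |φ p| :=
  hardy_inequality_halfspace_general n φ M hreg hbc hL1 hslice hM
end
end
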